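/- arXiv:1506.04657 — 2 statements merged into one kernel-verified Lean document; each statement's English description precedes it below -/
import Mathlib

section
/- If f(s,t) and g(s,t) are super-additive bivariate functions with f(t,t) = g(t,t) = 0 for all t, then their min-plus convolution h(s,t) = inf_{τ ∈ [s,t]} { f(s,τ) + g(τ,t) } is super-additive. -/
/-- The min-plus convolution of two super-additive bivariate functions
(vanishing on the diagonal) is super-additive. -/
theorem minplus_conv_superadditive (f g : ℕ → ℕ → ℝ)
    (hf0 : ∀ t, f t t = 0) (hg0 : ∀ t, g t t = 0)
    (hf : ∀ s t u, s ≤ t → t ≤ u → f s t + f t u ≤ f s u)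
    (hg : ∀ s t u, s ≤ t → t ≤ u → g s t + g t u ≤ g s u) :
    ∀ s t u, (hst : s ≤ t) → (htu : t ≤ u) →
      (Finset.Icc s t).inf' (Finset.nonempty_Icc.mpr hst) (fun τ => f s τ + g τ t)
        + (Finset.Icc t u).inf' (Finset.nonempty_Icc.mpr htu) (fun τ => f t τ + g τ u)
      ≤ (Finset.Icc s u).inf' (Finset.nonempty_Icc.mpr (hst.trans htu))
          (fun τ => f s τ + g τ u) := by
  intro s t u hst htu
  apply Finset.le_inf'
  intro τ hτ
  simp only [Finset.mem_Icc] at hτ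
  obtain ⟨hsτ, hτu⟩ := hτ
  rcases le_total τ t with h | h
  · have h1 : (Finset.Icc s t).inf' (Finset.nonempty_Icc.mpr hst) (fun τ => f s τ + g τ t)
        ≤ f s τ + g τ t :=
      Finset.inf'_le _ (Finset.mem_Icc.mpr ⟨hsτ, h⟩)
    have h2 : (Finset.Icc t u).inf' (Finset.nonempty_Icc.mpr htu) (fun τ => f t τ + g τ u)
        ≤ f t t + g t u :=
      Finset.inf'_le _ (Finset.mem_Icc.mpr ⟨le_refl t, htu⟩)
    have := hg τ t u h htu
    rw [hf0] at h2
    linarith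
  · have h1 : (Finset.Icc s t).inf' (Finset.nonempty_Icc.mpr hst) (fun τ => f s τ + g τ t)
        ≤ f s t + g t t :=
      Finset.inf'_le _ (Finset.mem_Icc.mpr ⟨hst, le_refl t⟩)
    have h2 : (Finset.Icc t u).inf' (Finset.nonempty_Icc.mpr htu) (fun τ => f t τ + g τ u)
        ≤ f t τ + g τ u :=
      Finset.inf'_le _ (Finset.mem_Icc.mpr ⟨h, hτu⟩)
    have := hf s t τ hst h
    rw [hg0] at h1
    linarith
end

section
/- Let S(τ,t) be a nonnegative random service process with Laplace transform M_S(-θ,τ,t) = E[e^{-θ S(τ,t)}], and define 𝒮^ε(τ,t) = -(1/θ(τ,t))(ln M_S(-θ(τ,t),τ,t) + ρ(t-τ) - ln(ρε)) for parameters θ(τ,t) > 0 and ρ ∈ (0, 1/ε]. Then for every t ≥ 0, P[∃ τ ∈ {0,...,t-1}: S(τ,t) < 𝒮^ε(τ,t)] ≤ ε. -/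
open MeasureTheory
open scoped ENNReal

/-- The function 𝒮^ε built from the Laplace transform of a nonnegative
service process is a non-stationary service curve: the probability that
the service underflows 𝒮^ε at some time τ < t is at most ε. -/
theorem laplace_service_curve
    {Ω : Type*} [MeasurableSpace Ω] (μ : Measure Ω) [IsProbabilityMeasure μ]
    (S : ℕ → ℕ → Ω → ℝ)
    (hSmeas : ∀ τ t, Measurable (S τ t))
    (hSnonneg : ∀ τ t ω, 0 ≤ S τ t ω)
    (hSdiag : ∀ t ω, S t t ω = 0)
    (θ : ℕ → ℕ → ℝ) (hθ : ∀ τ t, 0 < θ τ t)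
    (ρ ε : ℝ) (hρ : 0 < ρ) (hε : 0 < ε) (hε1 : ε ≤ 1) (hρε : ρ * ε ≤ 1) :
    ∀ t : ℕ,
      μ {ω | ∃ τ ∈ Finset.Ico 0 t, S τ t ω <
          -(1 / θ τ t) * (Real.log (∫ ω', Real.exp (-(θ τ t) * S τ t ω') ∂μ)
            + ρ * ((t : ℝ) - (τ : ℝ)) - Real.log (ρ * ε))} ≤ ENNReal.ofReal ε := by
  intro t
  set g : ℕ → ℝ := fun τ =>
      -(1 / θ τ t) * (Real.log (∫ ω', Real.exp (-(θ τ t) * S τ t ω') ∂μ)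
            + ρ * ((t : ℝ) - (τ : ℝ)) - Real.log (ρ * ε)) with hg
  have hρε0 : 0 < ρ * ε := mul_pos hρ hε
  -- per-term Chernoff bound
  have key : ∀ τ ∈ Finset.Ico 0 t,
      μ {ω | S τ t ω < g τ} ≤ ENNReal.ofReal (ρ * ε * Real.exp (-ρ * ((t : ℝ) - τ))) := by
    intro τ hτ
    have hθ0 := hθ τ t
    have hint : Integrable (fun ω => Real.exp ((-(θ τ t)) * S τ t ω)) μ := by
      refine Integrable.mono' (integrable_const 1)
        ((Real.measurable_exp.comp ((measurable_const.mul (hSmeas τ t)))).aestronglyMeasurable)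
        (Filter.Eventually.of_forall fun ω => ?_)
      rw [Real.norm_eq_abs, abs_of_pos (Real.exp_pos _)]
      exact Real.exp_le_one_iff.mpr (mul_nonpos_of_nonpos_of_nonneg
        (neg_nonpos.mpr hθ0.le) (hSnonneg τ t ω))
    set M : ℝ := ∫ ω', Real.exp (-(θ τ t) * S τ t ω') ∂μ with hM
    have hMpos : 0 < M := by
      rw [hM, integral_pos_iff_support_of_nonneg (fun ω => (Real.exp_pos _).le) hint]
      have : Function.support (fun ω' => Real.exp (-(θ τ t) * S τ t ω')) = Set.univ := by
        ext ω; simp [Real.exp_ne_zero]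
      rw [this]
      simp
    have hcher := ProbabilityTheory.measure_le_le_exp_mul_mgf (X := S τ t) (t := -(θ τ t))
      (μ := μ) (g τ) (neg_nonpos.mpr hθ0.le) hint
    have hmgf : ProbabilityTheory.mgf (S τ t) μ (-(θ τ t)) = M := rfl
    rw [hmgf] at hcher
    have hval : Real.exp (-(-(θ τ t)) * g τ) * M = ρ * ε * Real.exp (-ρ * ((t : ℝ) - τ)) := by
      have h1 : -(-(θ τ t)) * g τ
          = -(Real.log M + ρ * ((t : ℝ) - τ) - Real.log (ρ * ε)) := by
        rw [hg]
        field_simp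
        rw [hM]
        simp [neg_mul]
      have h2 : -(Real.log M + ρ * ((t : ℝ) - τ) - Real.log (ρ * ε))
          = Real.log (ρ * ε) - Real.log M + (-ρ * ((t : ℝ) - τ)) := by ring
      rw [h1, h2, Real.exp_add, Real.exp_sub, Real.exp_log hρε0, Real.exp_log hMpos]
      field_simp
    rw [hval] at hcher
    calc μ {ω | S τ t ω < g τ} ≤ μ {ω | S τ t ω ≤ g τ} := by
          apply measure_mono; intro ω hω
          simp only [Set.mem_setOf_eq] at hω ⊢; exact hω.le
      _ = ENNReal.ofReal ((μ {ω | S τ t ω ≤ g τ}).toReal) := by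
          rw [ENNReal.ofReal_toReal (measure_ne_top μ _)]
      _ ≤ ENNReal.ofReal (ρ * ε * Real.exp (-ρ * ((t : ℝ) - τ))) :=
          ENNReal.ofReal_le_ofReal hcher
  -- union bound
  have hset : {ω | ∃ τ ∈ Finset.Ico 0 t, S τ t ω < g τ}
      = ⋃ τ ∈ Finset.Ico 0 t, {ω | S τ t ω < g τ} := by
    ext ω; simp
  rw [hset]
  calc μ (⋃ τ ∈ Finset.Ico 0 t, {ω | S τ t ω < g τ})
      ≤ ∑ τ ∈ Finset.Ico 0 t, μ {ω | S τ t ω < g τ} := measure_biUnion_finset_le _ _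
    _ ≤ ∑ τ ∈ Finset.Ico 0 t, ENNReal.ofReal (ρ * ε * Real.exp (-ρ * ((t : ℝ) - τ))) :=
        Finset.sum_le_sum key
    _ = ENNReal.ofReal (∑ τ ∈ Finset.Ico 0 t, ρ * ε * Real.exp (-ρ * ((t : ℝ) - τ))) := by
        rw [ENNReal.ofReal_sum_of_nonneg]
        intro τ _
        positivity
    _ ≤ ENNReal.ofReal ε := by
        apply ENNReal.ofReal_le_ofReal
        -- sum bound
        have hsum : ∑ τ ∈ Finset.Ico 0 t, Real.exp (-ρ * ((t : ℝ) - τ)) ≤ 1 / ρ := by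
          have hr1 : Real.exp (-ρ) < 1 := Real.exp_lt_one_iff.mpr (by linarith)
          have hr0 : 0 < Real.exp (-ρ) := Real.exp_pos _
          have hre : ∑ τ ∈ Finset.Ico 0 t, Real.exp (-ρ * ((t : ℝ) - τ))
              = ∑ j ∈ Finset.range t, Real.exp (-ρ) * Real.exp (-ρ) ^ j := by
            rw [← Finset.range_eq_Ico,
              ← Finset.sum_range_reflect (fun j => Real.exp (-ρ) * Real.exp (-ρ) ^ j) t]
            apply Finset.sum_congr rfl
            intro τ hτ
            rw [Finset.mem_range] at hτ
            rw [← Real.exp_nat_mul, ← Real.exp_add]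
            congr 1
            have : ((t - 1 - τ : ℕ) : ℝ) = (t : ℝ) - 1 - τ := by
              have h1 : 1 + τ ≤ t := by omega
              rw [Nat.sub_sub, Nat.cast_sub h1]
              push_cast
              ring
            rw [this]
            ring
          rw [hre, ← Finset.mul_sum]
          have hgeom : ∑ j ∈ Finset.range t, Real.exp (-ρ) ^ j ≤ 1 / (1 - Real.exp (-ρ)) := by
            calc ∑ j ∈ Finset.range t, Real.exp (-ρ) ^ j
                = (1 - Real.exp (-ρ) ^ t) / (1 - Real.exp (-ρ)) := by
                  rw [geom_sum_eq (ne_of_lt hr1)]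
                  rw [← neg_sub (Real.exp (-ρ) ^ t) 1, ← neg_sub (Real.exp (-ρ)) 1,
                    neg_div_neg_eq]
              _ ≤ 1 / (1 - Real.exp (-ρ)) := by
                  rw [div_le_div_iff₀ (by linarith) (by linarith)]
                  nlinarith [pow_nonneg hr0.le t]
          have hfin : Real.exp (-ρ) * (1 / (1 - Real.exp (-ρ))) ≤ 1 / ρ := by
            rw [mul_one_div, div_le_div_iff₀ (by linarith) hρ]
            have h2 : Real.exp (-ρ) * Real.exp ρ = 1 := by
              rw [← Real.exp_add]; simp
            have h3 := mul_le_mul_of_nonneg_left (Real.add_one_le_exp ρ) hr0.le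
            nlinarith
          calc Real.exp (-ρ) * ∑ j ∈ Finset.range t, Real.exp (-ρ) ^ j
              ≤ Real.exp (-ρ) * (1 / (1 - Real.exp (-ρ))) := by
                exact mul_le_mul_of_nonneg_left hgeom hr0.le
            _ ≤ 1 / ρ := hfin
        calc ∑ τ ∈ Finset.Ico 0 t, ρ * ε * Real.exp (-ρ * ((t : ℝ) - τ))
            = ρ * ε * ∑ τ ∈ Finset.Ico 0 t, Real.exp (-ρ * ((t : ℝ) - τ)) := by
              rw [Finset.mul_sum]
          _ ≤ ρ * ε * (1 / ρ) := mul_le_mul_of_nonneg_left hsum hρε0.le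
          _ = ε := by field_simp
end
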